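/- Let V be a commutative unital ring and 𝔪 an idempotent ideal such that 𝔪̃ = 𝔪 ⊗_V 𝔪 is flat over V. Then the endofunctor M ↦ 𝔪̃ ⊗_V Hom_V(𝔪̃, M) on V-modules is exact: it preserves both kernels and cokernels of V-linear maps. -/

import Mathlib

/-!
Since `𝔪̃` is flat and `Hom(𝔪̃, -)` is left exact, everything comes down to the failure of
`Hom(𝔪̃, -)` to be right exact. For `a, b ∈ 𝔪` and `φ : 𝔪̃ → X`, the map `(a * b) • φ` equals
`t ↦ μ t • φ (a ⊗ b)`, with `μ : 𝔪̃ → V` the multiplication, so it lifts along any map whose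
range contains that of `φ`: the defect of right exactness is killed by `𝔪 * 𝔪 = 𝔪`. Tensoring
with `𝔪 ⊗ Q` then removes it, because `(a * b) ⊗ q ⊗ w = b ⊗ q ⊗ a • w`.
-/
open TensorProduct

variable {V : Type*} [CommRing V]

/-- 𝔪̃ = 𝔪 ⊗[V] 𝔪. -/
abbrev mTilde (𝔪 : Ideal V) : Type _ := ↥𝔪 ⊗[V] ↥𝔪

/-- The functor M ↦ 𝔪̃ ⊗_V Hom_V(𝔪̃, M) on morphisms:
f : M → N induces 𝔪̃ ⊗ Hom(𝔪̃, M) → 𝔪̃ ⊗ Hom(𝔪̃, N) by postcomposition. -/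
noncomputable def FF (𝔪 : Ideal V) {M N : Type*} [AddCommGroup M] [Module V M]
    [AddCommGroup N] [Module V N] (f : M →ₗ[V] N) :
    mTilde 𝔪 ⊗[V] (mTilde 𝔪 →ₗ[V] M) →ₗ[V] mTilde 𝔪 ⊗[V] (mTilde 𝔪 →ₗ[V] N) :=
  LinearMap.lTensor (mTilde 𝔪) (LinearMap.llcomp V (mTilde 𝔪) M N f)

open LinearMap

section
variable {𝔪 : Ideal V}

theorem lTensor_surjective_of_smul_top_le_range (hm : 𝔪 * 𝔪 = 𝔪) (Q : Type*) [AddCommGroup Q]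
    [Module V Q] {W₁ W₂ : Type*} [AddCommGroup W₁] [Module V W₁] [AddCommGroup W₂] [Module V W₂]
    (L : W₁ →ₗ[V] W₂) (hL : 𝔪 • (⊤ : Submodule V W₂) ≤ range L) :
    Function.Surjective (lTensor (𝔪 ⊗[V] Q) L) := by
  rw [← range_eq_top, eq_top_iff, ← span_tmul_eq_top, Submodule.span_le]
  rintro _ ⟨t, w, rfl⟩
  induction t using TensorProduct.induction_on with
  | zero => simp
  | add t₁ t₂ h₁ h₂ => rw [add_tmul]; exact add_mem h₁ h₂
  | tmul x q =>
    obtain ⟨x, hx⟩ := x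
    -- write `x ∈ 𝔪 * 𝔪` as a sum of products `a * b` and move each `a` over to `w`
    induction (hm.symm ▸ hx : x ∈ 𝔪 * 𝔪) using Submodule.mul_induction_on' with
    | mem_mul_mem a ha b hb =>
      obtain ⟨w', hw'⟩ := hL (Submodule.smul_mem_smul ha Submodule.mem_top)
      refine ⟨((⟨b, hb⟩ : 𝔪) ⊗ₜ q) ⊗ₜ w', ?_⟩
      rw [lTensor_tmul, hw', ← smul_tmul, smul_tmul']
      rfl
    | add a ha b hb iha ihb =>
      rw [show (⟨a + b, hx⟩ : 𝔪) = ⟨a, Ideal.mul_le_left ha⟩ + ⟨b, Ideal.mul_le_left hb⟩ from rfl,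
        add_tmul, add_tmul]
      exact add_mem (iha (Ideal.mul_le_left ha)) (ihb (Ideal.mul_le_left hb))

theorem lTensor_exact_of_smul_ker_le_range (hm : 𝔪 * 𝔪 = 𝔪) (Q : Type*) [AddCommGroup Q]
    [Module V Q] [Module.Flat V (𝔪 ⊗[V] Q)] {A B C : Type*} [AddCommGroup A] [Module V A]
    [AddCommGroup B] [Module V B] [AddCommGroup C] [Module V C] {f : A →ₗ[V] B} {g : B →ₗ[V] C}
    (hfg : ∀ a, g (f a) = 0) (h : 𝔪 • ker g ≤ range f) :
    Function.Exact (lTensor (𝔪 ⊗[V] Q) f) (lTensor (𝔪 ⊗[V] Q) g) := by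
  have hsurj : Function.Surjective (lTensor (𝔪 ⊗[V] Q) (f.codRestrict (ker g) hfg)) := by
    refine lTensor_surjective_of_smul_top_le_range hm Q _ (Submodule.smul_le.mpr ?_)
    rintro r hr ⟨b, hb⟩ -
    obtain ⟨a, ha⟩ := h (Submodule.smul_mem_smul hr hb)
    exact ⟨a, Subtype.ext ha⟩
  rw [← subtype_comp_codRestrict (f := f) (ker g) hfg, lTensor_comp, hsurj.comp_exact_iff_exact]
  exact Module.Flat.lTensor_exact _ g.exact_subtype_ker_map

theorem mul_smul_tmul_comm (a b x y : 𝔪) :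
    (a * b : V) • (x ⊗ₜ[V] y) = (x * y : V) • (a ⊗ₜ[V] b) := by
  have hax : (a : V) • x = (x : V) • a := Subtype.ext (mul_comm _ _)
  have hby : (b : V) • y = (y : V) • b := Subtype.ext (mul_comm _ _)
  calc (a * b : V) • (x ⊗ₜ[V] y) = ((a : V) • x) ⊗ₜ ((b : V) • y) := by
        rw [mul_smul, ← tmul_smul, smul_tmul']
    _ = ((x : V) • a) ⊗ₜ ((y : V) • b) := by rw [hax, hby]
    _ = (x * y : V) • (a ⊗ₜ[V] b) := by rw [mul_smul, ← tmul_smul, smul_tmul']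

theorem mul_smul_eq_smulRight_mulMap {X : Type*} [AddCommGroup X] [Module V X] (a b : 𝔪)
    (φ : mTilde 𝔪 →ₗ[V] X) :
    (a * b : V) • φ = (Submodule.mulMap 𝔪 𝔪 : mTilde 𝔪 →ₗ[V] V).smulRight (φ (a ⊗ₜ b)) := by
  refine TensorProduct.ext' fun x y ↦ ?_
  simp only [LinearMap.smul_apply, smulRight_apply, Submodule.mulMap_tmul, ← map_smul,
    mul_smul_tmul_comm]

theorem smul_le_range_llcomp (hm : 𝔪 * 𝔪 = 𝔪) {X Y : Type*} [AddCommGroup X] [Module V X]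
    [AddCommGroup Y] [Module V Y] (g : X →ₗ[V] Y) (S : Submodule V (mTilde 𝔪 →ₗ[V] Y))
    (hS : ∀ φ ∈ S, range φ ≤ range g) :
    𝔪 • S ≤ range (llcomp V (mTilde 𝔪) X Y g (σ₁₂ := .id V)) := by
  refine Submodule.smul_le.mpr fun r hr φ hφ ↦ ?_
  refine Submodule.mul_induction_on (hm.symm ▸ hr : r ∈ 𝔪 * 𝔪) (fun a ha b hb ↦ ?_)
    fun r s hr hs ↦ ?_
  · obtain ⟨x, hx⟩ := hS φ hφ ⟨(⟨a, ha⟩ : 𝔪) ⊗ₜ (⟨b, hb⟩ : 𝔪), rfl⟩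
    refine ⟨(Submodule.mulMap 𝔪 𝔪).smulRight x, ?_⟩
    rw [show (a * b) • φ = _ from mul_smul_eq_smulRight_mulMap ⟨a, ha⟩ ⟨b, hb⟩ φ]
    ext t
    simp [hx]
  · rw [add_smul]
    exact add_mem hr hs

end

/-- If 𝔪 is idempotent and 𝔪̃ = 𝔪 ⊗ 𝔪 is flat, then the endofunctor
M ↦ 𝔪̃ ⊗_V Hom_V(𝔪̃, M) is exact: it preserves injections, surjections,
and exactness of sequences (hence kernels and cokernels). -/
theorem stmt11 {V : Type u} [CommRing V] (𝔪 : Ideal V) (hm : 𝔪 * 𝔪 = 𝔪)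
    (hflat : Module.Flat V (mTilde 𝔪)) :
    ∀ (M N P : Type u) [AddCommGroup M] [Module V M] [AddCommGroup N] [Module V N]
      [AddCommGroup P] [Module V P] (f : M →ₗ[V] N) (g : N →ₗ[V] P),
      (Function.Injective f → Function.Injective (FF 𝔪 f)) ∧
      (Function.Surjective g → Function.Surjective (FF 𝔪 g)) ∧
      (Function.Exact f g → Function.Exact (FF 𝔪 f) (FF 𝔪 g)) := by
  have := hflat
  intro M N P _ _ _ _ _ _ f g
  refine ⟨fun hf ↦ ?_, fun hg ↦ ?_, fun hfg ↦ ?_⟩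
  · refine Module.Flat.lTensor_preserves_injective_linearMap _ fun φ ψ h ↦ ?_
    exact LinearMap.ext fun t ↦ hf congr($h t)
  · refine lTensor_surjective_of_smul_top_le_range hm 𝔪 _ (smul_le_range_llcomp hm g ⊤ ?_)
    simp [range_eq_top.mpr hg]
  · have hgf (φ : mTilde 𝔪 →ₗ[V] M) : g ∘ₗ f ∘ₗ φ = 0 := by
      ext t
      exact hfg.apply_apply_eq_zero _
    refine lTensor_exact_of_smul_ker_le_range hm 𝔪 hgf (smul_le_range_llcomp hm f _ ?_)
    rintro φ hφ _ ⟨t, rfl⟩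
    exact (hfg _).mp congr($hφ t)
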